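/- arXiv:2408.14304 — 3 statements merged into one kernel-verified Lean document; each statement's English description precedes it below -/
import Mathlib

section
/- Birkhoff decomposition: let H be a graded connected Hopf algebra, A a commutative algebra, and K : A → A a linear operator satisfying the Rota-Baxter identity K(a)K(b) = K(K(a)b + aK(b) − ab). For any character g : H → A there exist unique maps g₋ and g₊ with g₋(x) = −K((g₋ ⋆ g∘(id − u∘ē))(x)) and g₊(x) = (id_A − K)((g₋ ⋆ g∘(id − u∘ē))(x)) for x in the augmentation ideal, g₋(1)=g₊(1)=1, such that g = g₋^{⋆−1} ⋆ g₊. -/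
/-!
Write `ε := u_A ∘ ē` for the unit of the convolution ring. Since `H = K·1 ⊕ ker ē` and `g - ε`
kills `1`, the conditions on `g₋` say exactly `g₋ = ε - P ∘ (g₋ ⋆ (g - ε))`. On a connected graded
bialgebra the degree-`n` part of `f ⋆ ψ` with `ψ 1 = 0` only involves `f` in degrees `< n`, so this
equation has a unique solution, built degree by degree; the same principle makes every `φ` with
`φ 1 = 1` convolution-invertible. Then `g₊ := g₋ ⋆ g = ε + (id - P) ∘ (g₋ ⋆ (g - ε))` satisfies its
recursion, and `g = g₋^{⋆-1} ⋆ g₊`.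
-/

open TensorProduct

/-- Convolution product of linear maps from a coalgebra to an algebra. -/
noncomputable def conv {K C A : Type*} [CommRing K] [AddCommGroup C] [Module K C]
    [Coalgebra K C] [Ring A] [Algebra K A] (f g : C →ₗ[K] A) : C →ₗ[K] A :=
  LinearMap.mul' K A ∘ₗ TensorProduct.map f g ∘ₗ Coalgebra.comul

section Convolution

open WithConv

variable {R C A : Type*} [CommRing R] [AddCommGroup C] [Module R C] [Coalgebra R C]
  [Ring A] [Algebra R A]

lemma conv_assoc (f g h : C →ₗ[R] A) : conv (conv f g) h = conv f (conv g h) :=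
  congrArg ofConv (mul_assoc (toConv f) (toConv g) (toConv h))

lemma counit_conv (f : C →ₗ[R] A) :
    conv (Algebra.linearMap R A ∘ₗ Coalgebra.counit) f = f :=
  congrArg ofConv (one_mul (toConv f))

lemma conv_counit (f : C →ₗ[R] A) :
    conv f (Algebra.linearMap R A ∘ₗ Coalgebra.counit) = f :=
  congrArg ofConv (mul_one (toConv f))

lemma conv_sub_left (f g h : C →ₗ[R] A) : conv (f - g) h = conv f h - conv g h :=
  congrArg ofConv (sub_mul (toConv f) (toConv g) (toConv h))

lemma conv_add_right (f g h : C →ₗ[R] A) : conv f (g + h) = conv f g + conv f h :=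
  congrArg ofConv (mul_add (toConv f) (toConv g) (toConv h))

lemma conv_sub_right (f g h : C →ₗ[R] A) : conv f (g - h) = conv f g - conv f h :=
  congrArg ofConv (mul_sub (toConv f) (toConv g) (toConv h))

end Convolution

section Graded

variable {R M N : Type*} [Semiring R] [AddCommMonoid M] [Module R M] [AddCommMonoid N]
  [Module R N] {ℬ : ℕ → Submodule R M}

lemma LinearMap.ext_of_iSup_eq_top (hℬ : iSup ℬ = ⊤) {f g : M →ₗ[R] N}
    (h : ∀ i, ∀ x ∈ ℬ i, f x = g x) : f = g :=
  LinearMap.eqLocus_eq_top.1 <| eq_top_iff.2 <| hℬ ▸ iSup_le fun i x hx => h i x hx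

lemma DirectSum.IsInternal.exists_linearMap_comp_subtype_eq (hℬ : DirectSum.IsInternal ℬ)
    (f : ∀ i, ℬ i →ₗ[R] N) : ∃ F : M →ₗ[R] N, ∀ i, F ∘ₗ (ℬ i).subtype = f i := by
  set e := LinearEquiv.ofBijective (DirectSum.coeLinearMap ℬ) hℬ
  refine ⟨DirectSum.toModule R ℕ N f ∘ₗ e.symm.toLinearMap, fun i => LinearMap.ext fun x => ?_⟩
  have hx : e.symm x = DirectSum.lof R ℕ (fun i => ℬ i) i x :=
    e.symm_apply_eq.2 (DirectSum.coeLinearMap_of ℬ i x).symm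
  simp [hx]

variable (ℬ) in
def DependsOnLowerDegrees (T : (M →ₗ[R] N) → M →ₗ[R] N) : Prop :=
  ∀ f g n, (∀ m < n, ∀ y ∈ ℬ m, f y = g y) → ∀ x ∈ ℬ n, T f x = T g x

namespace DependsOnLowerDegrees

variable {T : (M →ₗ[R] N) → M →ₗ[R] N} (hT : DependsOnLowerDegrees ℬ T)
include hT

lemma eq_of_isFixedPt (hℬ : iSup ℬ = ⊤) {f g : M →ₗ[R] N} (hf : T f = f) (hg : T g = g) :
    f = g := by
  refine LinearMap.ext_of_iSup_eq_top hℬ fun n => ?_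
  induction n using Nat.strong_induction_on with
  | _ n ih =>
    intro x hx
    rw [← hf, ← hg]
    exact hT f g n ih x hx

lemma iterate_apply_eq (f₀ : M →ₗ[R] N) (m : ℕ) :
    ∀ n k, m < n → m < k → ∀ x ∈ ℬ m, T^[n] f₀ x = T^[k] f₀ x := by
  induction m using Nat.strong_induction_on with
  | _ m ih =>
    intro n k hn hk x hx
    obtain ⟨n, rfl⟩ := Nat.exists_eq_add_of_lt hn
    obtain ⟨k, rfl⟩ := Nat.exists_eq_add_of_lt hk
    rw [Function.iterate_succ_apply', Function.iterate_succ_apply']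
    exact hT _ _ m (fun j hj y hy => ih j hj (m + n) (m + k) (by omega) (by omega) y hy) x hx

lemma exists_isFixedPt (hℬ : DirectSum.IsInternal ℬ) : ∃ f, T f = f := by
  obtain ⟨F, hF⟩ := hℬ.exists_linearMap_comp_subtype_eq fun m => T^[m + 1] 0 ∘ₗ (ℬ m).subtype
  have hF' : ∀ m, ∀ x ∈ ℬ m, F x = T^[m + 1] 0 x := fun m x hx =>
    LinearMap.congr_fun (hF m) ⟨x, hx⟩
  refine ⟨F, LinearMap.ext_of_iSup_eq_top hℬ.submodule_iSup_eq_top fun m x hx => ?_⟩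
  rw [hF' m x hx, Function.iterate_succ_apply']
  refine hT _ _ m (fun j hj y hy => ?_) x hx
  rw [hF' j y hy]
  exact hT.iterate_apply_eq 0 j _ _ (by omega) hj y hy

lemma existsUnique_isFixedPt (hℬ : DirectSum.IsInternal ℬ) : ∃! f, T f = f :=
  let ⟨f, hf⟩ := hT.exists_isFixedPt hℬ
  ⟨f, hf, fun _ hg => hT.eq_of_isFixedPt hℬ.submodule_iSup_eq_top hg hf⟩

end DependsOnLowerDegrees

end Graded

section Bialgebra

variable {R H A : Type*} [CommRing R] [Ring H] [Bialgebra R H] [Ring A] [Algebra R A]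

def IsConnectedCoalgebraGrading (ℬ : ℕ → Submodule R H) : Prop :=
  ℬ 0 = 1 ∧ ∀ n, 1 ≤ n → ∀ x ∈ ℬ n,
    Coalgebra.comul (R := R) x - x ⊗ₜ[R] (1 : H) - (1 : H) ⊗ₜ[R] x ∈
      ⨆ (p : ℕ) (q : ℕ) (_ : p + q = n ∧ p ≠ 0 ∧ q ≠ 0),
        LinearMap.range (TensorProduct.map (ℬ p).subtype (ℬ q).subtype)

lemma conv_apply_one (f g : H →ₗ[R] A) : conv f g 1 = f 1 * g 1 := by
  simp [conv, Algebra.TensorProduct.one_def]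

lemma AlgHom.toLinearMap_comp_id_sub_unit_counit (g : H →ₐ[R] A) :
    g.toLinearMap ∘ₗ (LinearMap.id - Algebra.linearMap R H ∘ₗ Coalgebra.counit) =
      g.toLinearMap - Algebra.linearMap R A ∘ₗ Coalgebra.counit := by
  ext; simp

lemma eq_counit_add_iff (f ψ : H →ₗ[R] A) (hψ : ψ 1 = 0) :
    f = Algebra.linearMap R A ∘ₗ Coalgebra.counit + ψ ↔
      f 1 = 1 ∧ ∀ x, Coalgebra.counit (R := R) x = 0 → f x = ψ x := by
  constructor
  · rintro rfl
    exact ⟨by simp [hψ], fun x hx => by simp [hx]⟩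
  · rintro ⟨hf1, hf⟩
    ext x
    have hx : Coalgebra.counit (R := R) (x - Coalgebra.counit (R := R) x • 1) = 0 := by simp
    have := hf _ hx
    simp only [map_sub, map_smul, hf1, hψ, smul_zero, sub_zero] at this
    simp [← this, Algebra.algebraMap_eq_smul_one]

variable {ℬ : ℕ → Submodule R H} (hℬ : IsConnectedCoalgebraGrading ℬ)
include hℬ

lemma IsConnectedCoalgebraGrading.conv_apply_eq_zero {d ψ : H →ₗ[R] A} (hψ : ψ 1 = 0) {n : ℕ}
    (hd : ∀ m < n, ∀ y ∈ ℬ m, d y = 0) {x : H} (hx : x ∈ ℬ n) : conv d ψ x = 0 := by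
  obtain rfl | hn := Nat.eq_zero_or_pos n
  · obtain ⟨c, rfl⟩ := Submodule.mem_one.1 (hℬ.1 ▸ hx)
    rw [Algebra.algebraMap_eq_smul_one, map_smul, conv_apply_one, hψ, mul_zero, smul_zero]
  have hd1 : d 1 = 0 := hd 0 hn 1 (hℬ.1 ▸ Submodule.one_le.1 le_rfl)
  -- Every tensor `a ⊗ b` in the reduced coproduct has `a` of degree `< n`, where `d` vanishes.
  have hker : (⨆ (p : ℕ) (q : ℕ) (_ : p + q = n ∧ p ≠ 0 ∧ q ≠ 0),
      LinearMap.range (TensorProduct.map (ℬ p).subtype (ℬ q).subtype)) ≤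
        LinearMap.ker (LinearMap.mul' R A ∘ₗ TensorProduct.map d ψ) := by
    refine iSup_le fun p => iSup_le fun q => iSup_le fun hpq => ?_
    rw [LinearMap.range_le_ker_iff]
    ext a b
    simp [hd p (by omega) a a.2]
  simpa [conv, hψ, hd1] using hker (hℬ.2 n hn x hx)

lemma IsConnectedCoalgebraGrading.dependsOnLowerDegrees_conv (c : H →ₗ[R] A) (L : A →ₗ[R] A)
    {ψ : H →ₗ[R] A} (hψ : ψ 1 = 0) :
    DependsOnLowerDegrees ℬ fun f => c + L ∘ₗ conv f ψ := by
  intro f g n hfg x hx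
  have := hℬ.conv_apply_eq_zero hψ (d := f - g) (fun m hm y hy => by simp [hfg m hm y hy]) hx
  rw [conv_sub_left, LinearMap.sub_apply, sub_eq_zero] at this
  simp [this]

lemma IsConnectedCoalgebraGrading.exists_conv_eq_counit (hint : DirectSum.IsInternal ℬ)
    {φ : H →ₗ[R] A} (hφ : φ 1 = 1) :
    ∃ b, conv b φ = Algebra.linearMap R A ∘ₗ Coalgebra.counit := by
  set ε := Algebra.linearMap R A ∘ₗ Coalgebra.counit (R := R) (A := H)
  have hψ : (φ - ε) 1 = 0 := by simp [ε, hφ]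
  obtain ⟨b, hb⟩ := (hℬ.dependsOnLowerDegrees_conv ε (-LinearMap.id) hψ).exists_isFixedPt hint
  refine ⟨b, ?_⟩
  rw [← add_sub_cancel ε φ, conv_add_right, conv_counit]
  calc b + conv b (φ - ε) = (ε + (-LinearMap.id) ∘ₗ conv b (φ - ε)) + conv b (φ - ε) := by
        rw [hb]
    _ = ε := by ext; simp

lemma IsConnectedCoalgebraGrading.exists_conv_inverse (hint : DirectSum.IsInternal ℬ)
    {φ : H →ₗ[R] A} (hφ : φ 1 = 1) :
    ∃ b, conv b φ = Algebra.linearMap R A ∘ₗ Coalgebra.counit ∧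
      conv φ b = Algebra.linearMap R A ∘ₗ Coalgebra.counit := by
  -- A left inverse `b` again has `b 1 = 1`, so it has a left inverse `a`, and `a = a ⋆ b ⋆ φ = φ`.
  obtain ⟨b, hb⟩ := hℬ.exists_conv_eq_counit hint hφ
  have hb1 : b 1 = 1 := by simpa [conv_apply_one, hφ] using LinearMap.congr_fun hb 1
  obtain ⟨a, ha⟩ := hℬ.exists_conv_eq_counit hint hb1
  have hab : a = φ := by
    rw [← conv_counit a, ← hb, ← conv_assoc, ha, counit_conv]
  exact ⟨b, hb, hab ▸ ha⟩

end Bialgebra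

theorem stmt_8_general {K H A : Type*} [Field K] [Ring H] [HopfAlgebra K H]
    [CommRing A] [Algebra K A]
    (ℬ : ℕ → Submodule K H)
    (hinternal : DirectSum.IsInternal ℬ)
    (hconn : ℬ 0 = (1 : Submodule K H))
    (hred : ∀ n, 1 ≤ n → ∀ x ∈ ℬ n,
      Coalgebra.comul (R := K) x - x ⊗ₜ[K] (1 : H) - (1 : H) ⊗ₜ[K] x ∈
        ⨆ (p : ℕ) (q : ℕ) (_ : p + q = n ∧ p ≠ 0 ∧ q ≠ 0),
          LinearMap.range (TensorProduct.map (ℬ p).subtype (ℬ q).subtype))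
    (g : H →ₐ[K] A) (P : A →ₗ[K] A) :
    ∃! p : (H →ₗ[K] A) × (H →ₗ[K] A),
      p.1 1 = 1 ∧ p.2 1 = 1 ∧
      (∀ x, Coalgebra.counit (R := K) x = 0 →
        p.1 x = - P ((conv p.1 (g.toLinearMap ∘ₗ
          (LinearMap.id - (Algebra.linearMap K H) ∘ₗ Coalgebra.counit))) x)) ∧
      (∀ x, Coalgebra.counit (R := K) x = 0 →
        p.2 x = (conv p.1 (g.toLinearMap ∘ₗ
            (LinearMap.id - (Algebra.linearMap K H) ∘ₗ Coalgebra.counit))) x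
          - P ((conv p.1 (g.toLinearMap ∘ₗ
            (LinearMap.id - (Algebra.linearMap K H) ∘ₗ Coalgebra.counit))) x)) ∧
      (∃ ginv : H →ₗ[K] A,
        conv ginv p.1 = (Algebra.linearMap K A) ∘ₗ Coalgebra.counit ∧
        conv p.1 ginv = (Algebra.linearMap K A) ∘ₗ Coalgebra.counit ∧
        g.toLinearMap = conv ginv p.2) := by
  have hℬ : IsConnectedCoalgebraGrading ℬ := ⟨hconn, hred⟩
  set ε := Algebra.linearMap K A ∘ₗ Coalgebra.counit (R := K) (A := H)
  set Φ := g.toLinearMap ∘ₗ (LinearMap.id - Algebra.linearMap K H ∘ₗ Coalgebra.counit)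
  have hΦ : Φ = g.toLinearMap - ε := g.toLinearMap_comp_id_sub_unit_counit
  have hΦ1 : Φ 1 = 0 := by simp [hΦ, ε]
  have hconvΦ1 (f : H →ₗ[K] A) (L : A →ₗ[K] A) : (L ∘ₗ conv f Φ) 1 = 0 := by
    simp [conv_apply_one, hΦ1]
  have hminus_iff (f : H →ₗ[K] A) : ε + (-P) ∘ₗ conv f Φ = f ↔
      f 1 = 1 ∧ ∀ x, Coalgebra.counit (R := K) x = 0 → f x = -P (conv f Φ x) :=
    eq_comm.trans (eq_counit_add_iff f _ (hconvΦ1 f (-P)))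
  have hplus_iff (f h : H →ₗ[K] A) : h = ε + (LinearMap.id - P) ∘ₗ conv f Φ ↔
      h 1 = 1 ∧ ∀ x, Coalgebra.counit (R := K) x = 0 → h x = conv f Φ x - P (conv f Φ x) :=
    eq_counit_add_iff h _ (hconvΦ1 f (LinearMap.id - P))
  obtain ⟨F, hF, hF_uniq⟩ :=
    (hℬ.dependsOnLowerDegrees_conv ε (-P) hΦ1).existsUnique_isFixedPt hinternal
  have hplus : conv F g.toLinearMap = ε + (LinearMap.id - P) ∘ₗ conv F Φ :=
    calc conv F g.toLinearMap = F + conv F Φ := by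
          rw [hΦ, conv_sub_right, conv_counit]; abel
      _ = ε + (-P) ∘ₗ conv F Φ + conv F Φ := by rw [hF]
      _ = ε + (LinearMap.id - P) ∘ₗ conv F Φ := by
          ext x
          simp only [LinearMap.add_apply, LinearMap.comp_apply, LinearMap.neg_apply,
            LinearMap.sub_apply, LinearMap.id_apply]
          abel
  obtain ⟨hF1, hF_rec⟩ := (hminus_iff F).1 hF
  obtain ⟨hplus1, hplus_rec⟩ := (hplus_iff F _).1 hplus
  obtain ⟨Finv, hFinvF, hFFinv⟩ := hℬ.exists_conv_inverse hinternal hF1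
  refine ⟨(F, conv F g.toLinearMap), ⟨hF1, hplus1, hF_rec, hplus_rec, Finv, hFinvF, hFFinv,
    by rw [← conv_assoc, hFinvF, counit_conv]⟩, ?_⟩
  rintro ⟨q₁, q₂⟩ ⟨hq₁1, hq₂1, hq₁_rec, hq₂_rec, -⟩
  obtain rfl : q₁ = F := hF_uniq q₁ ((hminus_iff q₁).2 ⟨hq₁1, hq₁_rec⟩)
  exact Prod.ext rfl (((hplus_iff q₁ q₂).2 ⟨hq₂1, hq₂_rec⟩).trans hplus.symm)

/-- **Birkhoff decomposition.** Let `H` be a graded connected Hopf algebra over a field `K`,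
`A` a commutative algebra, and `P : A → A` a linear operator satisfying the Rota–Baxter identity
`P(a)P(b) = P(P(a)b + aP(b) − ab)`. For any character `g : H → A` there is a unique pair
`(g₋, g₊)` with `g₋(1) = g₊(1) = 1`,
`g₋(x) = −P((g₋ ⋆ g∘(id − u∘ē))(x))` and `g₊(x) = (id_A − P)((g₋ ⋆ g∘(id − u∘ē))(x))`
on the augmentation ideal, such that `g = g₋^{⋆−1} ⋆ g₊` (where `g₋^{⋆−1}` is the convolution
inverse of `g₋`). -/
theorem stmt_8 {K H A : Type*} [Field K] [Ring H] [HopfAlgebra K H]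
    [CommRing A] [Algebra K A]
    (ℬ : ℕ → Submodule K H)
    (hinternal : DirectSum.IsInternal ℬ)
    (hconn : ℬ 0 = (1 : Submodule K H))
    (hcounit : ∀ n, n ≠ 0 → ∀ x ∈ ℬ n, Coalgebra.counit (R := K) x = 0)
    (hred : ∀ n, 1 ≤ n → ∀ x ∈ ℬ n,
      Coalgebra.comul (R := K) x - x ⊗ₜ[K] (1 : H) - (1 : H) ⊗ₜ[K] x ∈
        ⨆ (p : ℕ) (q : ℕ) (_ : p + q = n ∧ p ≠ 0 ∧ q ≠ 0),
          LinearMap.range (TensorProduct.map (ℬ p).subtype (ℬ q).subtype))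
    (g : H →ₐ[K] A) (P : A →ₗ[K] A)
    (hP : ∀ a b, P a * P b = P (P a * b + a * P b - a * b)) :
    ∃! p : (H →ₗ[K] A) × (H →ₗ[K] A),
      p.1 1 = 1 ∧ p.2 1 = 1 ∧
      (∀ x, Coalgebra.counit (R := K) x = 0 →
        p.1 x = - P ((conv p.1 (g.toLinearMap ∘ₗ
          (LinearMap.id - (Algebra.linearMap K H) ∘ₗ Coalgebra.counit))) x)) ∧
      (∀ x, Coalgebra.counit (R := K) x = 0 →
        p.2 x = (conv p.1 (g.toLinearMap ∘ₗ
            (LinearMap.id - (Algebra.linearMap K H) ∘ₗ Coalgebra.counit))) x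
          - P ((conv p.1 (g.toLinearMap ∘ₗ
            (LinearMap.id - (Algebra.linearMap K H) ∘ₗ Coalgebra.counit))) x)) ∧
      (∃ ginv : H →ₗ[K] A,
        conv ginv p.1 = (Algebra.linearMap K A) ∘ₗ Coalgebra.counit ∧
        conv p.1 ginv = (Algebra.linearMap K A) ∘ₗ Coalgebra.counit ∧
        g.toLinearMap = conv ginv p.2) :=
  stmt_8_general ℬ hinternal hconn hred g P
end

section
/- In the Birkhoff decomposition of a character g : H → A of a graded connected Hopf algebra with Rota-Baxter projection K, both components g₋ and g₊ are again characters (algebra homomorphisms) of H into A. -/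
/-!
Put `Φ = g₋ ⋆ g`. Since `g ∘ (id − u∘ε) = g − u_A∘ε`, the Bogoliubov preparation is
`ḡ = Φ − g₋`, so on the augmentation ideal `g₋ = −P ḡ` and `g₊ = ḡ − P ḡ = Φ`.

Multiplicativity of `g₋` on homogeneous `x, y` goes by induction on the total degree. By
connectedness `Δx − x ⊗ 1` only has left factors of degree `< deg x`, so in the expansion of
`Δx Δy` every term except `(x ⊗ 1)(y ⊗ 1)` has left factors of lower total degree, so `Φ(xy) − Φ(x)Φ(y) = g₋(xy) − g₋(x)g₋(y)`, i.e.
`ḡ(xy) = ḡ(x)ḡ(y) + ḡ(x)g₋(y) + g₋(x)ḡ(y)`. Applying `−P` and the Rota–Baxter identity of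
weight `−1` gives `g₋(xy) = P(ḡx) P(ḡy) = g₋(x) g₋(y)`. Finally `g₊ = g₋ ⋆ g` is a convolution of
characters with values in a commutative algebra, hence a character.
-/

open TensorProduct

open WithConv

section Convolution

variable {K H A : Type*} [CommRing K] [Ring H] [Bialgebra K H] [CommRing A] [Algebra K A]

theorem conv_eq_ofConv_mul (f g : H →ₗ[K] A) : conv f g = (toConv f * toConv g).ofConv := rfl

theorem conv_algHom_comp_id_sub_counit (f : H →ₗ[K] A) (g : H →ₐ[K] A) :
    conv f (g.toLinearMap ∘ₗ (LinearMap.id - Algebra.linearMap K H ∘ₗ Coalgebra.counit)) =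
      conv f g - f := by
  have hsplit : g.toLinearMap ∘ₗ (LinearMap.id - Algebra.linearMap K H ∘ₗ Coalgebra.counit) =
      (toConv g.toLinearMap - 1).ofConv := by
    ext x
    simp
  rw [hsplit, conv_eq_ofConv_mul, conv_eq_ofConv_mul, toConv_ofConv, mul_sub, mul_one]
  rfl

end Convolution

theorem LinearMap.eq_of_eqOn_ker_counit {K H M : Type*} [CommRing K] [Ring H] [Bialgebra K H]
    [AddCommGroup M] [Module K M] {f f' : H →ₗ[K] M} (h1 : f 1 = f' 1)
    (h : ∀ x, Coalgebra.counit (R := K) x = 0 → f x = f' x) : f = f' := by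
  ext x
  have hx : x = (x - algebraMap K H (Coalgebra.counit x)) + Coalgebra.counit (R := K) x • 1 := by
    rw [Algebra.algebraMap_eq_smul_one]; abel
  have hker : Coalgebra.counit (R := K) (x - algebraMap K H (Coalgebra.counit x)) = 0 := by
    simp
  rw [hx, map_add, map_add, map_smul, map_smul, h _ hker, h1]

def leftDegreeLT {K H : Type*} [CommRing K] [AddCommGroup H] [Module K H]
    (ℬ : ℕ → Submodule K H) (p : ℕ) : Submodule K (H ⊗[K] H) :=
  Submodule.span K {t | ∃ a < p, ∃ x ∈ ℬ a, ∃ y : H, t = x ⊗ₜ y}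

theorem tmul_mem_leftDegreeLT {K H : Type*} [CommRing K] [AddCommGroup H] [Module K H]
    {ℬ : ℕ → Submodule K H} {a p : ℕ} (ha : a < p) {x : H} (hx : x ∈ ℬ a) (y : H) :
    x ⊗ₜ[K] y ∈ leftDegreeLT ℬ p :=
  Submodule.subset_span ⟨a, ha, x, hx, y, rfl⟩

theorem comul_sub_tmul_one_mem_leftDegreeLT {K H : Type*} [CommRing K] [Ring H]
    [Bialgebra K H] {ℬ : ℕ → Submodule K H} (hconn : ℬ 0 = (1 : Submodule K H))
    (hred : ∀ n, 1 ≤ n → ∀ x ∈ ℬ n,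
      Coalgebra.comul (R := K) x - x ⊗ₜ[K] (1 : H) - (1 : H) ⊗ₜ[K] x ∈
        ⨆ (p : ℕ) (q : ℕ) (_ : p + q = n ∧ p ≠ 0 ∧ q ≠ 0),
          LinearMap.range (TensorProduct.map (ℬ p).subtype (ℬ q).subtype))
    {p : ℕ} {x : H} (hx : x ∈ ℬ p) :
    Coalgebra.comul (R := K) x - x ⊗ₜ[K] 1 ∈ leftDegreeLT ℬ p := by
  rcases Nat.eq_zero_or_pos p with rfl | hp
  · rw [hconn, Submodule.one_eq_span, Submodule.mem_span_singleton] at hx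
    obtain ⟨c, rfl⟩ := hx
    simp [Algebra.TensorProduct.one_def, TensorProduct.smul_tmul']
  have hreduced : ⨆ (a : ℕ) (b : ℕ) (_ : a + b = p ∧ a ≠ 0 ∧ b ≠ 0),
      LinearMap.range (TensorProduct.map (ℬ a).subtype (ℬ b).subtype) ≤ leftDegreeLT ℬ p := by
    refine iSup₂_le fun a b => iSup_le fun hab => ?_
    rintro _ ⟨t, rfl⟩
    induction t using TensorProduct.induction_on with
    | zero => simp
    | tmul u v => exact tmul_mem_leftDegreeLT (by omega) u.2 v
    | add s t hs ht => rw [map_add]; exact add_mem hs ht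
  have hone : (1 : H) ∈ ℬ 0 := by rw [hconn]; exact Submodule.one_le.mp le_rfl
  have := add_mem (hreduced (hred p hp x hx)) (tmul_mem_leftDegreeLT hp hone x)
  rwa [sub_add_cancel] at this

section Multiplicativity

variable {K H A : Type*} [CommRing K] [Ring H] [Bialgebra K H] [CommRing A] [Algebra K A]
  {ℬ : ℕ → Submodule K H} (f : H →ₗ[K] A) (g : H →ₐ[K] A)

theorem mul'_map_mul_of_mem_leftDegreeLT {p q : ℕ}
    (hf : ∀ a < p, ∀ b < q, ∀ u ∈ ℬ a, ∀ v ∈ ℬ b, f (u * v) = f u * f v)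
    {S T : H ⊗[K] H} (hS : S ∈ leftDegreeLT ℬ p) (hT : T ∈ leftDegreeLT ℬ q) :
    LinearMap.mul' K A (TensorProduct.map f g.toLinearMap (S * T)) =
      LinearMap.mul' K A (TensorProduct.map f g.toLinearMap S) *
        LinearMap.mul' K A (TensorProduct.map f g.toLinearMap T) := by
  induction hS using Submodule.span_induction with
  | mem S hS =>
    obtain ⟨a, ha, u, hu, w, rfl⟩ := hS
    induction hT using Submodule.span_induction with
    | mem T hT =>
      obtain ⟨b, hb, v, hv, z, rfl⟩ := hT
      simp only [Algebra.TensorProduct.tmul_mul_tmul, TensorProduct.map_tmul,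
        LinearMap.mul'_apply, AlgHom.coe_toLinearMap, map_mul, hf a ha b hb u hu v hv]
      ring
    | zero => simp
    | add T T' _ _ hT hT' => simp only [mul_add, map_add, hT, hT']
    | smul c T _ hT => simp only [mul_smul_comm, map_smul, hT]
  | zero => simp
  | add S S' _ _ hS hS' => simp only [add_mul, map_add, hS, hS']
  | smul c S _ hS => simp only [smul_mul_assoc, map_smul, hS]

/-- Only the leading term `(x ⊗ 1)(y ⊗ 1)` of `Δx Δy` escapes the hypothesis on lower degrees. -/
theorem conv_apply_mul_sub_eq
    (hΔ : ∀ p, ∀ x ∈ ℬ p, Coalgebra.comul (R := K) x - x ⊗ₜ[K] 1 ∈ leftDegreeLT ℬ p)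
    {p q : ℕ} (hf : ∀ a b, a + b < p + q → ∀ u ∈ ℬ a, ∀ v ∈ ℬ b, f (u * v) = f u * f v)
    {x y : H} (hx : x ∈ ℬ p) (hy : y ∈ ℬ q) :
    conv f g (x * y) - conv f g x * conv f g y = f (x * y) - f x * f y := by
  set F := LinearMap.mul' K A ∘ₗ TensorProduct.map f g.toLinearMap
  have hF : ∀ {p' q'}, p' + q' ≤ p + q + 1 → ∀ {S T}, S ∈ leftDegreeLT ℬ p' →
      T ∈ leftDegreeLT ℬ q' → F (S * T) = F S * F T := fun hpq _ _ hS hT =>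
    mul'_map_mul_of_mem_leftDegreeLT f g (fun a ha b hb => hf a b (by omega)) hS hT
  obtain ⟨Rx, hRx, hΔx⟩ : ∃ R ∈ leftDegreeLT ℬ p, Coalgebra.comul (R := K) x = x ⊗ₜ 1 + R :=
    ⟨_, hΔ p x hx, by abel⟩
  obtain ⟨Ry, hRy, hΔy⟩ : ∃ R ∈ leftDegreeLT ℬ q, Coalgebra.comul (R := K) y = y ⊗ₜ 1 + R :=
    ⟨_, hΔ q y hy, by abel⟩
  have hx1 := tmul_mem_leftDegreeLT (Nat.lt_succ_self p) hx (1 : H)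
  have hy1 := tmul_mem_leftDegreeLT (Nat.lt_succ_self q) hy (1 : H)
  have hFtmul : ∀ z : H, F (z ⊗ₜ 1) = f z := fun z => by simp [F]
  change F (Coalgebra.comul (x * y)) - F (Coalgebra.comul x) * F (Coalgebra.comul y) = _
  rw [Bialgebra.comul_mul, hΔx, hΔy, add_mul, mul_add, mul_add, map_add, map_add, map_add,
    Algebra.TensorProduct.tmul_mul_tmul, mul_one, hF (by omega) hx1 hRy, hF (by omega) hRx hy1,
    hF (by omega) hRx hRy, map_add, map_add, hFtmul, hFtmul, hFtmul]
  ring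

end Multiplicativity

theorem neg_rotaBaxter_apply_mul {K A : Type*} [CommRing K] [CommRing A] [Algebra K A]
    {P : A →ₗ[K] A} (hP : ∀ a b, P a * P b = P (P a * b + a * P b - a * b)) (a b : A) :
    -P ((a - P a) * (b - P b) - P a * P b) = P a * P b := by
  conv_rhs => rw [hP, ← neg_neg (P _), ← map_neg]
  congr 2
  ring

theorem LinearMap.map_mul_of_iSup_eq_top {K H A ι : Type*} [CommRing K] [Ring H] [Algebra K H]
    [Ring A] [Algebra K A] {ℬ : ι → Submodule K H} (hℬ : ⨆ i, ℬ i = ⊤) (f : H →ₗ[K] A)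
    (hf : ∀ p q, ∀ x ∈ ℬ p, ∀ y ∈ ℬ q, f (x * y) = f x * f y) (x y : H) :
    f (x * y) = f x * f y := by
  have hmem : ∀ z : H, z ∈ ⨆ i, ℬ i := fun z => hℬ ▸ Submodule.mem_top
  induction hmem x using Submodule.iSup_induction' with
  | mem p x hx =>
    induction hmem y using Submodule.iSup_induction' with
    | mem q y hy => exact hf p q x hx y hy
    | zero => simp
    | add y y' _ _ hy hy' => rw [mul_add, map_add, hy, hy', map_add, mul_add]
  | zero => simp
  | add x x' _ _ hx hx' => rw [add_mul, map_add, hx, hx', map_add, add_mul]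

theorem birkhoffMinus_map_mul_of_mem {K H A : Type*} [CommRing K] [Ring H] [Bialgebra K H]
    [CommRing A] [Algebra K A] {ℬ : ℕ → Submodule K H} {g : H →ₐ[K] A} {P : A →ₗ[K] A}
    {gm : H →ₗ[K] A} (hconn : ℬ 0 = (1 : Submodule K H))
    (hcounit : ∀ n, n ≠ 0 → ∀ x ∈ ℬ n, Coalgebra.counit (R := K) x = 0)
    (hΔ : ∀ p, ∀ x ∈ ℬ p, Coalgebra.comul (R := K) x - x ⊗ₜ[K] 1 ∈ leftDegreeLT ℬ p)
    (hP : ∀ a b, P a * P b = P (P a * b + a * P b - a * b)) (hgm1 : gm 1 = 1)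
    (hgm : ∀ x, Coalgebra.counit (R := K) x = 0 → gm x = -P (conv gm g x - gm x))
    (p q : ℕ) {x y : H} (hx : x ∈ ℬ p) (hy : y ∈ ℬ q) :
    gm (x * y) = gm x * gm y := by
  induction h : p + q using Nat.strong_induction_on generalizing p q x y with
  | _ n IH =>
  have hunit : ∀ z ∈ ℬ 0, ∃ c : K, c • 1 = z := fun z hz => by
    rwa [hconn, Submodule.one_eq_span, Submodule.mem_span_singleton] at hz
  rcases Nat.eq_zero_or_pos p with rfl | hp
  · obtain ⟨c, rfl⟩ := hunit x hx
    simp [hgm1]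
  rcases Nat.eq_zero_or_pos q with rfl | hq
  · obtain ⟨c, rfl⟩ := hunit y hy
    simp [hgm1]
  have hεx := hcounit p hp.ne' x hx
  have hεy := hcounit q hq.ne' y hy
  have hεxy : Coalgebra.counit (R := K) (x * y) = 0 := by simp [hεx]
  obtain ⟨a, hxa, hx'⟩ : ∃ a, gm x = -P a ∧ conv gm g x = a - P a :=
    ⟨_, hgm x hεx, by linear_combination hgm x hεx⟩
  obtain ⟨b, hyb, hy'⟩ : ∃ b, gm y = -P b ∧ conv gm g y = b - P b :=
    ⟨_, hgm y hεy, by linear_combination hgm y hεy⟩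
  have hconv : conv gm g (x * y) - gm (x * y) = conv gm g x * conv gm g y - gm x * gm y := by
    linear_combination conv_apply_mul_sub_eq gm g hΔ
      (fun a b hab u hu v hv => IH (a + b) (h ▸ hab) a b hu hv rfl) hx hy
  calc gm (x * y) = -P (conv gm g (x * y) - gm (x * y)) := hgm _ hεxy
    _ = -P ((a - P a) * (b - P b) - P a * P b) := by
      rw [hconv, hx', hy', hxa, hyb, neg_mul_neg]
    _ = gm x * gm y := by rw [neg_rotaBaxter_apply_mul hP, hxa, hyb, neg_mul_neg]

/-- **The Birkhoff components are characters.** Let `H` be a graded connected Hopf algebra over a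
field `K`, `A` a commutative algebra, `P` a Rota–Baxter operator of weight −1 on `A`, and
`g : H → A` a character. If `g₋, g₊ : H → A` satisfy the Birkhoff recursions
`g₋ = −P∘(g₋ ⋆ g∘(id−u∘ē))` and `g₊ = (id_A − P)∘(g₋ ⋆ g∘(id−u∘ē))` on the augmentation ideal
and take the value `1` on the unit, then both `g₋` and `g₊` are algebra homomorphisms. -/
theorem stmt_9 {K H A : Type*} [Field K] [Ring H] [HopfAlgebra K H]
    [CommRing A] [Algebra K A]
    (ℬ : ℕ → Submodule K H)
    (hinternal : DirectSum.IsInternal ℬ)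
    (hconn : ℬ 0 = (1 : Submodule K H))
    (hcounit : ∀ n, n ≠ 0 → ∀ x ∈ ℬ n, Coalgebra.counit (R := K) x = 0)
    (hred : ∀ n, 1 ≤ n → ∀ x ∈ ℬ n,
      Coalgebra.comul (R := K) x - x ⊗ₜ[K] (1 : H) - (1 : H) ⊗ₜ[K] x ∈
        ⨆ (p : ℕ) (q : ℕ) (_ : p + q = n ∧ p ≠ 0 ∧ q ≠ 0),
          LinearMap.range (TensorProduct.map (ℬ p).subtype (ℬ q).subtype))
    (g : H →ₐ[K] A) (P : A →ₗ[K] A)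
    (hP : ∀ a b, P a * P b = P (P a * b + a * P b - a * b))
    (gm gp : H →ₗ[K] A) (hgm1 : gm 1 = 1) (hgp1 : gp 1 = 1)
    (hgm : ∀ x, Coalgebra.counit (R := K) x = 0 →
      gm x = - P ((conv gm (g.toLinearMap ∘ₗ
        (LinearMap.id - (Algebra.linearMap K H) ∘ₗ Coalgebra.counit))) x))
    (hgp : ∀ x, Coalgebra.counit (R := K) x = 0 →
      gp x = (conv gm (g.toLinearMap ∘ₗ
          (LinearMap.id - (Algebra.linearMap K H) ∘ₗ Coalgebra.counit))) x
        - P ((conv gm (g.toLinearMap ∘ₗ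
          (LinearMap.id - (Algebra.linearMap K H) ∘ₗ Coalgebra.counit))) x)) :
    (∃ hm : H →ₐ[K] A, hm.toLinearMap = gm) ∧ (∃ hp : H →ₐ[K] A, hp.toLinearMap = gp) := by
  simp only [conv_algHom_comp_id_sub_counit, LinearMap.sub_apply] at hgm hgp
  have hΔ := fun p x hx => comul_sub_tmul_one_mem_leftDegreeLT (p := p) (x := x) hconn hred hx
  have hmul := LinearMap.map_mul_of_iSup_eq_top hinternal.submodule_iSup_eq_top gm
    fun p q _ hx _ hy => birkhoffMinus_map_mul_of_mem hconn hcounit hΔ hP hgm1 hgm p q hx hy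
  let gmHom : H →ₐ[K] A := AlgHom.ofLinearMap gm hgm1 hmul
  refine ⟨⟨gmHom, rfl⟩, ⟨(toConv gmHom * toConv g).ofConv, ?_⟩⟩
  refine LinearMap.eq_of_eqOn_ker_counit (by simp [hgp1]) fun x hx => ?_
  change conv gm g x = gp x
  linear_combination hgm x hx - hgp x hx
end

section
/- Let H be a graded connected Hopf algebra, A a commutative algebra, and K : A → A a Rota-Baxter operator of weight −1. Define the 'twisted antipode' S_K : H → A recursively by S_K(1) = 1 and S_K(x) = −φ(x) − Σ K(S_K(x′))·φ(x″) for x in the augmentation ideal (with Δ(x) = x⊗1 + 1⊗x + Σ x′⊗x″), where φ : H → A is a character. Then K∘S_K equals the Birkhoff negative part φ₋ of the character φ, i.e., K∘S_K(x) = φ₋(x) = −K(φ(x) + Σ φ₋(x′)φ(x″)) for all x in the augmentation ideal. -/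
/-!
Applying `P` to the recursion defining `S_P` shows that `P ∘ S_P` satisfies the Birkhoff recursion
defining `φ₋`. The difference `P ∘ S_P - φ₋` therefore vanishes on the augmentation ideal: by
induction on the degree, since the reduced coproduct of a homogeneous element of degree `n` only
involves left factors of positive degree `< n`.
-/

open TensorProduct

section Graded

variable {K H : Type*} [CommRing K] [Ring H] [Bialgebra K H]

def reducedComul (x : H) : H ⊗[K] H :=
  Coalgebra.comul (R := K) x - x ⊗ₜ[K] (1 : H) - (1 : H) ⊗ₜ[K] x

variable (ℬ : ℕ → Submodule K H)

def positivePart : Submodule K H := ⨆ (n : ℕ) (_ : 1 ≤ n), ℬ n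

lemma sup_positivePart_eq_top (htop : ⨆ n, ℬ n = ⊤) : ℬ 0 ⊔ positivePart ℬ = ⊤ := by
  refine top_unique (htop ▸ iSup_le fun n => ?_)
  rcases Nat.eq_zero_or_pos n with rfl | hn
  · exact le_sup_left
  · exact (le_iSup₂ (f := fun n (_ : 1 ≤ n) => ℬ n) n hn).trans le_sup_right

lemma positivePart_le_ker_counit
    (hcounit : ∀ n, n ≠ 0 → ∀ x ∈ ℬ n, Coalgebra.counit (R := K) x = 0) :
    positivePart ℬ ≤ LinearMap.ker (Coalgebra.counit (R := K) (A := H)) :=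
  iSup₂_le fun n hn x hx => hcounit n (by omega) x hx

lemma mem_positivePart_of_counit_eq_zero (htop : ⨆ n, ℬ n = ⊤)
    (hconn : ℬ 0 = (1 : Submodule K H))
    (hcounit : ∀ n, n ≠ 0 → ∀ x ∈ ℬ n, Coalgebra.counit (R := K) x = 0)
    {x : H} (hx : Coalgebra.counit (R := K) x = 0) :
    x ∈ positivePart ℬ := by
  have hmem : x ∈ ℬ 0 ⊔ positivePart ℬ := sup_positivePart_eq_top ℬ htop ▸ Submodule.mem_top
  obtain ⟨y, hy, z, hz, rfl⟩ := Submodule.mem_sup.mp hmem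
  rw [hconn, Submodule.mem_one] at hy
  obtain ⟨c, rfl⟩ := hy
  have hcz : Coalgebra.counit (R := K) z = 0 := positivePart_le_ker_counit ℬ hcounit hz
  rw [map_add, hcz, add_zero, Bialgebra.counit_algebraMap] at hx
  simpa [hx] using hz

variable {M N : Type*} [AddCommGroup M] [Module K M] [AddCommGroup N] [Module K N]

/-- Strong induction on the degree: `reducedComul` only has left factors of smaller positive
degree. -/
lemma positivePart_le_ker_of_recursion
    (hcounit : ∀ n, n ≠ 0 → ∀ x ∈ ℬ n, Coalgebra.counit (R := K) x = 0)
    (hred : ∀ n, 1 ≤ n → ∀ x ∈ ℬ n, reducedComul x ∈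
        ⨆ (p : ℕ) (q : ℕ) (_ : p + q = n ∧ p ≠ 0 ∧ q ≠ 0),
          LinearMap.range (TensorProduct.map (ℬ p).subtype (ℬ q).subtype))
    (D : H →ₗ[K] M) (ψ : H →ₗ[K] N)
    (hrec : ∀ x, Coalgebra.counit (R := K) x = 0 → TensorProduct.map D ψ (reducedComul x) = 0 →
      D x = 0) :
    positivePart ℬ ≤ LinearMap.ker D := by
  suffices h : ∀ n, 1 ≤ n → ℬ n ≤ LinearMap.ker D from iSup₂_le h
  intro n
  induction n using Nat.strong_induction_on with
  | _ n ih =>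
    intro hn x hx
    refine hrec x (hcounit n (by omega) x hx) ?_
    refine (?_ : _ ≤ LinearMap.ker (TensorProduct.map D ψ)) (hred n hn x hx)
    refine iSup_le fun p => iSup_le fun q => iSup_le fun ⟨hpq, hp, hq⟩ => ?_
    rw [LinearMap.range_le_ker_iff]
    refine TensorProduct.ext' fun a b => ?_
    have hDa : D a = 0 := ih p (by omega) (by omega) a.2
    simp [hDa]

end Graded

section Birkhoff

variable {K H A : Type*} [CommRing K] [Ring H] [Bialgebra K H] [Ring A] [Algebra K A]

lemma sub_apply_eq_zero_of_birkhoffRecursion (P : A →ₗ[K] A) (ψ : H →ₗ[K] A) {f g : H →ₗ[K] A}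
    {x : H} (hf : f x = -P (ψ x + LinearMap.mul' K A (TensorProduct.map f ψ (reducedComul x))))
    (hg : g x = -P (ψ x + LinearMap.mul' K A (TensorProduct.map g ψ (reducedComul x))))
    (hfg : TensorProduct.map (f - g) ψ (reducedComul x) = 0) :
    (f - g) x = 0 := by
  have hmap : TensorProduct.map (f - g) ψ = TensorProduct.map f ψ - TensorProduct.map g ψ :=
    TensorProduct.ext' fun a b => by simp [TensorProduct.sub_tmul]
  rw [hmap, LinearMap.sub_apply, sub_eq_zero] at hfg
  rw [LinearMap.sub_apply, hf, hg, hfg, sub_self]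

end Birkhoff

theorem stmt_19_general {K H A : Type*} [Field K] [Ring H] [HopfAlgebra K H]
    [CommRing A] [Algebra K A]
    (ℬ : ℕ → Submodule K H)
    (hinternal : DirectSum.IsInternal ℬ)
    (hconn : ℬ 0 = (1 : Submodule K H))
    (hcounit : ∀ n, n ≠ 0 → ∀ x ∈ ℬ n, Coalgebra.counit (R := K) x = 0)
    (hred : ∀ n, 1 ≤ n → ∀ x ∈ ℬ n,
      Coalgebra.comul (R := K) x - x ⊗ₜ[K] (1 : H) - (1 : H) ⊗ₜ[K] x ∈
        ⨆ (p : ℕ) (q : ℕ) (_ : p + q = n ∧ p ≠ 0 ∧ q ≠ 0),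
          LinearMap.range (TensorProduct.map (ℬ p).subtype (ℬ q).subtype))
    (φ : H →ₐ[K] A) (P : A →ₗ[K] A)
    (SP : H →ₗ[K] A)
    (hSP : ∀ x, Coalgebra.counit (R := K) x = 0 →
      SP x = - φ x - (LinearMap.mul' K A)
        ((TensorProduct.map (P ∘ₗ SP) φ.toLinearMap)
          (Coalgebra.comul (R := K) x - x ⊗ₜ[K] (1 : H) - (1 : H) ⊗ₜ[K] x)))
    (φm : H →ₗ[K] A)
    (hφm : ∀ x, Coalgebra.counit (R := K) x = 0 →
      φm x = - P (φ x + (LinearMap.mul' K A)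
        ((TensorProduct.map φm φ.toLinearMap)
          (Coalgebra.comul (R := K) x - x ⊗ₜ[K] (1 : H) - (1 : H) ⊗ₜ[K] x)))) :
    ∀ x, Coalgebra.counit (R := K) x = 0 → P (SP x) = φm x := by
  intro x hx
  have hPSP : ∀ y, Coalgebra.counit (R := K) y = 0 → (P ∘ₗ SP) y = -P (φ y +
      LinearMap.mul' K A (TensorProduct.map (P ∘ₗ SP) φ.toLinearMap (reducedComul y))) := by
    intro y hy
    rw [LinearMap.comp_apply, hSP y hy, reducedComul, ← neg_add', map_neg]
  exact sub_eq_zero.mp <| positivePart_le_ker_of_recursion ℬ hcounit hred _ φ.toLinearMap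
    (fun y hy => sub_apply_eq_zero_of_birkhoffRecursion P φ.toLinearMap (hPSP y hy) (hφm y hy))
    (mem_positivePart_of_counit_eq_zero ℬ hinternal.submodule_iSup_eq_top hconn hcounit hx)

/-- **The twisted antipode gives the Birkhoff negative part.** Let `H` be a graded connected Hopf
algebra over a field `K`, `A` a commutative algebra, `P : A → A` a Rota–Baxter operator of weight
−1, and `φ : H → A` a character. Define the twisted antipode `S_P : H → A` by `S_P(1) = 1` and
`S_P(x) = −φ(x) − Σ P(S_P(x′))·φ(x″)` on the augmentation ideal (sum over the reduced coproduct
`Δ̃(x) = Δ(x) − x⊗1 − 1⊗x = Σ x′⊗x″`), and let `φ₋` satisfy the Birkhoff recursion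
`φ₋(x) = −P(φ(x) + Σ φ₋(x′)φ(x″))` with `φ₋(1) = 1`. Then `P∘S_P = φ₋` on the augmentation
ideal. -/
theorem stmt_19 {K H A : Type*} [Field K] [Ring H] [HopfAlgebra K H]
    [CommRing A] [Algebra K A]
    (ℬ : ℕ → Submodule K H)
    (hinternal : DirectSum.IsInternal ℬ)
    (hconn : ℬ 0 = (1 : Submodule K H))
    (hcounit : ∀ n, n ≠ 0 → ∀ x ∈ ℬ n, Coalgebra.counit (R := K) x = 0)
    (hred : ∀ n, 1 ≤ n → ∀ x ∈ ℬ n,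
      Coalgebra.comul (R := K) x - x ⊗ₜ[K] (1 : H) - (1 : H) ⊗ₜ[K] x ∈
        ⨆ (p : ℕ) (q : ℕ) (_ : p + q = n ∧ p ≠ 0 ∧ q ≠ 0),
          LinearMap.range (TensorProduct.map (ℬ p).subtype (ℬ q).subtype))
    (φ : H →ₐ[K] A) (P : A →ₗ[K] A)
    (hP : ∀ a b, P a * P b = P (P a * b + a * P b - a * b))
    (SP : H →ₗ[K] A) (hSP1 : SP 1 = 1)
    (hSP : ∀ x, Coalgebra.counit (R := K) x = 0 →
      SP x = - φ x - (LinearMap.mul' K A)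
        ((TensorProduct.map (P ∘ₗ SP) φ.toLinearMap)
          (Coalgebra.comul (R := K) x - x ⊗ₜ[K] (1 : H) - (1 : H) ⊗ₜ[K] x)))
    (φm : H →ₗ[K] A) (hφm1 : φm 1 = 1)
    (hφm : ∀ x, Coalgebra.counit (R := K) x = 0 →
      φm x = - P (φ x + (LinearMap.mul' K A)
        ((TensorProduct.map φm φ.toLinearMap)
          (Coalgebra.comul (R := K) x - x ⊗ₜ[K] (1 : H) - (1 : H) ⊗ₜ[K] x)))) :
    ∀ x, Coalgebra.counit (R := K) x = 0 → P (SP x) = φm x :=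
  stmt_19_general ℬ hinternal hconn hcounit hred φ P SP hSP φm hφm
end
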